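/- arXiv:2405.04822 — 7 statements merged into one kernel-verified Lean document; each statement's English description precedes it below -/
import Mathlib

section
/- Let $a, b, c$ be points in a real inner product space with $b \neq c$, and let $\ell_{b,c}$ denote the affine line through $b$ and $c$. Then the distance from $a$ to $\ell_{b,c}$ satisfies $\operatorname{dist}(a, \ell_{b,c})^2 \le \frac{(\|b-a\| + \|c-a\|)^2 - \|b-c\|^2}{4}$. -/
/-- Lemma 3.3: height bound for a Euclidean triangle. For points `a b c` in a real
inner product space with `b ≠ c`, the distance from `a` to the affine line through
`b` and `c` satisfies `dist(a, l)² ≤ ((‖b-a‖+‖c-a‖)² - ‖b-c‖²)/4`. -/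
theorem height_le_excess {E : Type*} [NormedAddCommGroup E] [InnerProductSpace ℝ E]
    (a b c : E) (hbc : b ≠ c) :
    (Metric.infDist a (affineSpan ℝ ({b, c} : Set E) : Set E)) ^ 2 ≤
      ((‖b - a‖ + ‖c - a‖) ^ 2 - ‖b - c‖ ^ 2) / 4 := by
  have hd0 : (0:ℝ) < ‖c - b‖ := by
    rw [norm_pos_iff, sub_ne_zero]
    exact hbc.symm
  set ip : ℝ := inner ℝ (a - b) (c - b) with hip
  set t : ℝ := ip / ‖c - b‖ ^ 2 with ht
  have hz : AffineMap.lineMap b c t ∈ (affineSpan ℝ ({b, c} : Set E) : Set E) :=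
    AffineMap.lineMap_mem_affineSpan_pair t b c
  have h1 : Metric.infDist a (affineSpan ℝ ({b, c} : Set E) : Set E)
      ≤ dist a (AffineMap.lineMap b c t) := Metric.infDist_le_dist_of_mem hz
  have h0 : 0 ≤ Metric.infDist a (affineSpan ℝ ({b, c} : Set E) : Set E) :=
    Metric.infDist_nonneg
  have h2 : (Metric.infDist a (affineSpan ℝ ({b, c} : Set E) : Set E)) ^ 2
      ≤ dist a (AffineMap.lineMap b c t) ^ 2 := by
    apply pow_le_pow_left₀ h0 h1
  refine h2.trans ?_
  have hdist : dist a (AffineMap.lineMap b c t) = ‖(a - b) - t • (c - b)‖ := by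
    rw [dist_eq_norm, AffineMap.lineMap_apply]
    congr 1
    simp [vsub_eq_sub, vadd_eq_add]
    abel
  rw [hdist]
  -- expand the squared norm
  have hsq : ‖(a - b) - t • (c - b)‖ ^ 2
      = ‖a - b‖ ^ 2 - 2 * t * ip + t ^ 2 * ‖c - b‖ ^ 2 := by
    rw [norm_sub_sq_real, norm_smul, real_inner_smul_right, ← hip]
    simp only [mul_pow, sq_abs, Real.norm_eq_abs]
    ring
  rw [hsq]
  -- relate ip to the side lengths
  have hipval : ‖c - a‖ ^ 2 = ‖c - b‖ ^ 2 - 2 * ip + ‖a - b‖ ^ 2 := by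
    have : c - a = (c - b) - (a - b) := by abel
    rw [this, norm_sub_sq_real, real_inner_comm, ← hip]
  have hba : ‖b - a‖ = ‖a - b‖ := norm_sub_rev _ _
  have hbc' : ‖b - c‖ = ‖c - b‖ := norm_sub_rev _ _
  have htri : ‖c - b‖ ≤ ‖b - a‖ + ‖c - a‖ := by
    calc ‖c - b‖ = ‖(c - a) + (a - b)‖ := by congr 1; abel
    _ ≤ ‖c - a‖ + ‖a - b‖ := norm_add_le _ _
    _ = ‖b - a‖ + ‖c - a‖ := by rw [hba]; ring
  set s := ‖a - b‖
  set r := ‖c - a‖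
  set d := ‖c - b‖
  rw [hba, hbc']
  have hs : 0 ≤ s := norm_nonneg _
  have hr : 0 ≤ r := norm_nonneg _
  have hd2 : (0:ℝ) < d ^ 2 := by positivity
  have htval : t = ip / d ^ 2 := ht
  rw [htval]
  -- clear denominators and finish with nlinarith
  have key : s ^ 2 * d ^ 2 - ip ^ 2 ≤ ((s + r) ^ 2 - d ^ 2) / 4 * d ^ 2 := by
    have hipeq : ip = (d ^ 2 + s ^ 2 - r ^ 2) / 2 := by linarith [hipval]
    rw [hipeq]
    have htri' : d ≤ s + r := by rw [← hba]; exact htri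
    have hfact : ((s + r) ^ 2 - d ^ 2) / 4 * d ^ 2
        - (s ^ 2 * d ^ 2 - ((d ^ 2 + s ^ 2 - r ^ 2) / 2) ^ 2)
        = (s + r - d) * (s + r + d) * (s - r) ^ 2 / 4 := by ring
    have hnn : 0 ≤ (s + r - d) * (s + r + d) * (s - r) ^ 2 / 4 := by
      have := mul_nonneg (mul_nonneg (sub_nonneg.2 htri')
        (by linarith : (0:ℝ) ≤ s + r + d)) (sq_nonneg (s - r))
      linarith
    linarith
  have hexp : s ^ 2 - 2 * (ip / d ^ 2) * ip + (ip / d ^ 2) ^ 2 * d ^ 2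
      = (s ^ 2 * d ^ 2 - ip ^ 2) / d ^ 2 := by
    field_simp
    ring
  rw [hexp]
  rw [div_le_iff₀ hd2]
  linarith [key]
end

section
/- Let $(M, d)$ be a metric space, let $m \ge 1$, and let $f : M \to \mathbb{R}^m$ be $1$-Lipschitz, i.e. $\|f(x) - f(y)\| \le d(x, y)$ for all $x, y \in M$. Let $p, q \in M$ with $f(p) \neq f(q)$, and assume $d(p, q) \le \pi$ and the excess bound $d(p, a) + d(q, a) \le 2\pi - d(p, q)$ holds for a point $a \in M$. Then the distance from $f(a)$ to the affine line $\ell$ through $f(p)$ and $f(q)$ satisfies $\operatorname{dist}(f(a), \ell)^2 \le \pi \cdot (\pi - \|f(p) - f(q)\|)$; in particular $\operatorname{dist}(f(a), \ell) \le \sqrt{\pi} \cdot \sqrt{\pi - \|f(p) - f(q)\|}$. -/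
open Real Metric

/-- Proposition 3.4 (metric-space content): if `f : M → ℝ^m` is 1-Lipschitz,
`f p ≠ f q`, `d(p,q) ≤ π`, and the excess bound `d(p,a) + d(q,a) ≤ 2π - d(p,q)` holds,
then the distance from `f a` to the affine line through `f p` and `f q` satisfies
`dist(f a, ℓ)² ≤ π(π - ‖f p - f q‖)`, and in particular
`dist(f a, ℓ) ≤ √π ⬝ √(π - ‖f p - f q‖)`. -/
theorem height_estimate_of_excess {M : Type*} [MetricSpace M] {m : ℕ} (hm : 1 ≤ m)
    (f : M → EuclideanSpace ℝ (Fin m))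
    (hf : ∀ x y : M, ‖f x - f y‖ ≤ dist x y)
    (p q a : M) (hpq : f p ≠ f q) (hd : dist p q ≤ π)
    (hexc : dist p a + dist q a ≤ 2 * π - dist p q) :
    (Metric.infDist (f a) (affineSpan ℝ ({f p, f q} : Set (EuclideanSpace ℝ (Fin m))) : Set (EuclideanSpace ℝ (Fin m)))) ^ 2
        ≤ π * (π - ‖f p - f q‖) ∧
      Metric.infDist (f a) (affineSpan ℝ ({f p, f q} : Set (EuclideanSpace ℝ (Fin m))) : Set (EuclideanSpace ℝ (Fin m)))
        ≤ Real.sqrt π * Real.sqrt (π - ‖f p - f q‖) := by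
  set b := f p with hb
  set c := f q with hc
  set x := f a with hx
  set s : ℝ := ‖b - c‖ with hs
  have hs0 : 0 < s := by
    rw [hs, norm_pos_iff, sub_ne_zero]; exact hpq
  set u : ℝ := ‖x - b‖ with hu
  set v : ℝ := ‖x - c‖ with hv
  have hu0 : (0:ℝ) ≤ u := norm_nonneg _
  have hv0 : (0:ℝ) ≤ v := norm_nonneg _
  have hsd : s ≤ dist p q := hf p q
  have hsπ : s ≤ π := hsd.trans hd
  have huv : u + v ≤ 2 * π - s := by
    have h1 : u ≤ dist p a := by
      have := hf a p; rw [dist_comm] at this; simpa [hu, hx, hb] using this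
    have h2 : v ≤ dist q a := by
      have := hf a q; rw [dist_comm] at this; simpa [hv, hx, hc] using this
    linarith
  have htri1 : u ≤ v + s := by
    have : x - b = (x - c) + (c - b) := by abel
    calc u = ‖(x - c) + (c - b)‖ := by rw [hu, this]
    _ ≤ ‖x - c‖ + ‖c - b‖ := norm_add_le _ _
    _ = v + s := by rw [norm_sub_rev c b]
  have htri2 : v ≤ u + s := by
    have : x - c = (x - b) + (b - c) := by abel
    calc v = ‖(x - b) + (b - c)‖ := by rw [hv, this]
    _ ≤ ‖x - b‖ + ‖b - c‖ := norm_add_le _ _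
  have htri3 : s ≤ u + v := by
    have : b - c = -(x - b) + (x - c) := by abel
    calc s = ‖-(x - b) + (x - c)‖ := by rw [hs, this]
    _ ≤ ‖-(x - b)‖ + ‖x - c‖ := norm_add_le _ _
    _ = u + v := by rw [norm_neg]
  set t : ℝ := (u ^ 2 - v ^ 2 + s ^ 2) / (2 * s) with ht
  set y := AffineMap.lineMap b c (t / s) with hy
  have hymem : y ∈ (affineSpan ℝ ({b, c} : Set (EuclideanSpace ℝ (Fin m))) :
      Set (EuclideanSpace ℝ (Fin m))) :=
    AffineMap.lineMap_mem_affineSpan_pair (t / s) b c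
  have hinner : (inner ℝ (x - b) (c - b) : ℝ) = (u ^ 2 + s ^ 2 - v ^ 2) / 2 := by
    have hxc : x - c = (x - b) - (c - b) := by abel
    have hv2 : v ^ 2 = u ^ 2 - 2 * (inner ℝ (x - b) (c - b) : ℝ) + s ^ 2 := by
      rw [hv, hxc, norm_sub_sq_real, ← hu, norm_sub_rev c b, ← hs]
    linarith
  have hzz : ‖c - b‖ = s := by rw [hs, norm_sub_rev]
  have hts : t * (2 * s) = u ^ 2 - v ^ 2 + s ^ 2 := by
    rw [ht, div_mul_cancel₀ _ (by positivity : (2 * s) ≠ 0)]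
  have hdy : dist x y ^ 2 = u ^ 2 - t ^ 2 := by
    have hxy : x - y = (x - b) - (t / s) • (c - b) := by
      rw [hy, AffineMap.lineMap_apply]
      simp [vsub_eq_sub, vadd_eq_add]
      abel
    rw [dist_eq_norm, hxy, norm_sub_sq_real, real_inner_smul_right, hinner, norm_smul,
      hzz, ← hu]
    rw [Real.norm_eq_abs, mul_pow, sq_abs]
    have h2 : (u ^ 2 + s ^ 2 - v ^ 2) / 2 = t * s := by
      rw [ht]; field_simp; ring
    rw [h2]
    field_simp
    ring
  have hkey : u ^ 2 - t ^ 2 ≤ π * (π - s) := by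
    have hmul : (0:ℝ) < 4 * s ^ 2 := by positivity
    rw [← mul_le_mul_iff_right₀ hmul]
    have hAB : (v + s - u) * (u + s - v) ≤ s ^ 2 := by nlinarith [sq_nonneg (u - v)]
    have hE : u + v - s ≤ 2 * (π - s) := by linarith
    have hS : u + v + s ≤ 2 * π := by linarith
    have h1 : (u + v - s) * ((v + s - u) * (u + s - v)) ≤ (2 * (π - s)) * s ^ 2 := by
      exact mul_le_mul hE hAB (mul_nonneg (by linarith) (by linarith)) (by linarith)
    have h2 : ((u + v - s) * ((v + s - u) * (u + s - v))) * (u + v + s) ≤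
        ((2 * (π - s)) * s ^ 2) * (2 * π) := by
      exact mul_le_mul h1 hS (by linarith) (mul_nonneg (by linarith) (by positivity))
    have hid : 4 * s ^ 2 * (u ^ 2 - t ^ 2) =
        ((u + v - s) * ((v + s - u) * (u + s - v))) * (u + v + s) := by
      linear_combination (-(2 * s * t) - (u ^ 2 - v ^ 2 + s ^ 2)) * hts
    calc 4 * s ^ 2 * (u ^ 2 - t ^ 2)
        = ((u + v - s) * ((v + s - u) * (u + s - v))) * (u + v + s) := hid
      _ ≤ ((2 * (π - s)) * s ^ 2) * (2 * π) := h2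
      _ = 4 * s ^ 2 * (π * (π - s)) := by ring
  have hinf : Metric.infDist x (affineSpan ℝ ({b, c} : Set (EuclideanSpace ℝ (Fin m))) :
      Set (EuclideanSpace ℝ (Fin m))) ≤ dist x y :=
    Metric.infDist_le_dist_of_mem hymem
  have hinf0 : 0 ≤ Metric.infDist x (affineSpan ℝ ({b, c} : Set (EuclideanSpace ℝ (Fin m))) :
      Set (EuclideanSpace ℝ (Fin m))) := Metric.infDist_nonneg
  have hsq : (Metric.infDist x (affineSpan ℝ ({b, c} : Set (EuclideanSpace ℝ (Fin m))) :
      Set (EuclideanSpace ℝ (Fin m)))) ^ 2 ≤ π * (π - s) := by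
    calc _ ≤ dist x y ^ 2 := by
          apply pow_le_pow_left₀ hinf0 hinf
    _ = u ^ 2 - t ^ 2 := hdy
    _ ≤ π * (π - s) := hkey
  refine ⟨hsq, ?_⟩
  have : Metric.infDist x (affineSpan ℝ ({b, c} : Set (EuclideanSpace ℝ (Fin m))) :
      Set (EuclideanSpace ℝ (Fin m))) ≤ Real.sqrt (π * (π - s)) := by
    rw [show Metric.infDist x (affineSpan ℝ ({b, c} : Set (EuclideanSpace ℝ (Fin m))) :
        Set (EuclideanSpace ℝ (Fin m))) =
        Real.sqrt ((Metric.infDist x (affineSpan ℝ ({b, c} : Set (EuclideanSpace ℝ (Fin m))) :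
        Set (EuclideanSpace ℝ (Fin m)))) ^ 2) from (Real.sqrt_sq hinf0).symm]
    exact Real.sqrt_le_sqrt hsq
  rwa [Real.sqrt_mul Real.pi_pos.le] at this
end

section
/- Let $n \ge 1$ and $r > 0$. Let $\Omega \subseteq \mathbb{R}^{n+1}$ be a nonempty compact convex set contained in the closed ball $\overline{B}(0, r)$. Then for every boundary point $y \in \partial\Omega$ there exists a point $x$ with $\|x\| = r$ such that $y$ is a nearest point of $\Omega$ to $x$, i.e. $\|x - y\| = \inf_{z \in \Omega} \|x - z\|$. In other words, $\partial\Omega$ is contained in the image of the sphere $\{\|x\| = r\}$ under the nearest-point projection onto $\Omega$. -/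
open Metric

/-- The geometric step of Lemma 4.2: for a nonempty compact convex set `Ω` inside the
closed ball of radius `r` in `ℝ^{n+1}`, every boundary point of `Ω` is the nearest
point of `Ω` to some point of the sphere of radius `r`. -/
theorem frontier_subset_proj_sphere (n : ℕ) (hn : 1 ≤ n) (r : ℝ) (hr : 0 < r)
    (Ω : Set (EuclideanSpace ℝ (Fin (n + 1)))) (hΩne : Ω.Nonempty) (hΩc : IsCompact Ω)
    (hΩconv : Convex ℝ Ω) (hΩsub : Ω ⊆ Metric.closedBall 0 r) :
    ∀ y ∈ frontier Ω, ∃ x : EuclideanSpace ℝ (Fin (n + 1)),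
      ‖x‖ = r ∧ y ∈ Ω ∧ dist x y = Metric.infDist x Ω := by
  intro y hy
  have hΩcl : IsClosed Ω := hΩc.isClosed
  have hyΩ : y ∈ Ω := by
    have := frontier_subset_closure hy
    rwa [hΩcl.closure_eq] at this
  have hyni : y ∉ interior Ω := hy.2
  -- Step 1: a sequence of points outside Ω converging to y
  have hseq : ∀ k : ℕ, ∃ u : EuclideanSpace ℝ (Fin (n + 1)),
      dist u y < 1 / ((k : ℝ) + 1) ∧ u ∉ Ω := by
    intro k
    by_contra h
    push_neg at h
    apply hyni
    have hpos : (0 : ℝ) < 1 / ((k : ℝ) + 1) := by positivity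
    exact mem_interior.2 ⟨ball y (1 / ((k : ℝ) + 1)),
      fun u hu => h u (mem_ball.1 hu), isOpen_ball, mem_ball_self hpos⟩
  choose u hu1 hu2 using hseq
  -- Step 2: project each u k onto Ω
  have hproj : ∀ k : ℕ, ∃ p ∈ Ω, ‖u k - p‖ = ⨅ w : Ω, ‖u k - w‖ := fun k =>
    exists_norm_eq_iInf_of_complete_convex hΩne hΩcl.isComplete hΩconv (u k)
  choose p hp hpe using hproj
  have hne : ∀ k, u k - p k ≠ 0 := by
    intro k h
    exact hu2 k (by rw [sub_eq_zero] at h; rw [h]; exact hp k)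
  have hiner : ∀ k, ∀ w ∈ Ω, inner ℝ (u k - p k) (w - p k) ≤ (0 : ℝ) := fun k =>
    (norm_eq_iInf_iff_real_inner_le_zero hΩconv (hp k)).1 (hpe k)
  set v : ℕ → EuclideanSpace ℝ (Fin (n + 1)) :=
    fun k => (‖u k - p k‖⁻¹ : ℝ) • (u k - p k) with hvdef
  have hv1 : ∀ k, ‖v k‖ = 1 := fun k => norm_smul_inv_norm (hne k)
  have hvin : ∀ k, ∀ w ∈ Ω, inner ℝ (v k) (w - p k) ≤ (0 : ℝ) := by
    intro k w hw
    rw [hvdef]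
    simp only [real_inner_smul_left]
    exact mul_nonpos_of_nonneg_of_nonpos (by positivity) (hiner k w hw)
  -- p k → y
  have hple : ∀ k : ℕ, dist (p k) y ≤ 2 * (1 / ((k : ℝ) + 1)) := by
    intro k
    have h1 : ‖u k - p k‖ ≤ ‖u k - y‖ := by
      rw [hpe k]
      exact ciInf_le ⟨0, by rintro _ ⟨i, rfl⟩; exact norm_nonneg _⟩ (⟨y, hyΩ⟩ : Ω)
    have h2 : dist (p k) y ≤ dist (p k) (u k) + dist (u k) y := dist_triangle _ _ _
    have h3 : dist (p k) (u k) = ‖u k - p k‖ := by rw [dist_comm, dist_eq_norm]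
    have h4 : ‖u k - y‖ = dist (u k) y := (dist_eq_norm _ _).symm
    have := (hu1 k).le
    linarith
  have hpt : Filter.Tendsto p Filter.atTop (nhds y) := by
    rw [tendsto_iff_dist_tendsto_zero]
    apply squeeze_zero (fun k => dist_nonneg) hple
    have h0 : Filter.Tendsto (fun k : ℕ => 1 / ((k : ℝ) + 1)) Filter.atTop (nhds 0) :=
      tendsto_one_div_add_atTop_nhds_zero_nat
    simpa using h0.const_mul 2
  -- Step 3: extract a convergent subsequence of unit vectors
  obtain ⟨v₀, hv₀mem, φ, hφ, hvt⟩ :=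
    (isCompact_sphere (0 : EuclideanSpace ℝ (Fin (n + 1))) 1).tendsto_subseq
      (x := v) (fun k => mem_sphere_zero_iff_norm.2 (hv1 k))
  have hv₀ : ‖v₀‖ = 1 := mem_sphere_zero_iff_norm.1 hv₀mem
  have key : ∀ z ∈ Ω, inner ℝ v₀ (z - y) ≤ (0 : ℝ) := by
    intro z hz
    have ht : Filter.Tendsto (fun k => (inner ℝ (v (φ k)) (z - p (φ k)) : ℝ))
        Filter.atTop (nhds (inner ℝ v₀ (z - y))) :=
      hvt.inner (tendsto_const_nhds.sub (hpt.comp hφ.tendsto_atTop))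
    exact le_of_tendsto ht (Filter.Eventually.of_forall fun k => hvin (φ k) z hz)
  -- Step 4: intermediate value theorem along the ray y + t • v₀
  have hyr : ‖y‖ ≤ r := mem_closedBall_zero_iff.1 (hΩsub hyΩ)
  set T : ℝ := r + ‖y‖ with hT
  have hT0 : (0 : ℝ) ≤ T := by positivity
  have hcont : ContinuousOn (fun t : ℝ => ‖y + t • v₀‖) (Set.Icc 0 T) :=
    (continuous_norm.comp (continuous_const.add (continuous_id.smul continuous_const))).continuousOn
  have hmem : r ∈ Set.Icc (‖y + (0 : ℝ) • v₀‖) (‖y + T • v₀‖) := by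
    constructor
    · simpa using hyr
    · have h1 : ‖T • v₀‖ ≤ ‖y + T • v₀‖ + ‖y‖ := by
        calc ‖T • v₀‖ = ‖(y + T • v₀) - y‖ := by rw [add_sub_cancel_left]
          _ ≤ ‖y + T • v₀‖ + ‖y‖ := norm_sub_le _ _
      have h2 : ‖T • v₀‖ = T := by
        rw [norm_smul, hv₀, Real.norm_eq_abs, abs_of_nonneg hT0, mul_one]
      rw [hT] at h2
      linarith
  obtain ⟨t₀, ht₀mem, ht₀⟩ := intermediate_value_Icc hT0 hcont hmem
  have ht₀0 : 0 ≤ t₀ := ht₀mem.1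
  refine ⟨y + t₀ • v₀, ht₀, hyΩ, ?_⟩
  have hdxy : dist (y + t₀ • v₀) y = t₀ := by
    rw [dist_eq_norm, add_sub_cancel_left, norm_smul, hv₀, Real.norm_eq_abs,
      abs_of_nonneg ht₀0, mul_one]
  -- the distance to any point of Ω is at least t₀
  have hle : ∀ z ∈ Ω, dist (y + t₀ • v₀) y ≤ dist (y + t₀ • v₀) z := by
    intro z hz
    have hrw : (y + t₀ • v₀) - z = t₀ • v₀ + (y - z) := by abel
    have hexp : ‖(y + t₀ • v₀) - z‖ ^ 2
        = ‖t₀ • v₀‖ ^ 2 + 2 * inner ℝ (t₀ • v₀) (y - z) + ‖y - z‖ ^ 2 := by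
      rw [hrw]; exact norm_add_sq_real _ _
    have hnsm : ‖t₀ • v₀‖ = t₀ := by
      rw [norm_smul, hv₀, Real.norm_eq_abs, abs_of_nonneg ht₀0, mul_one]
    have hip : 0 ≤ (inner ℝ v₀ (y - z) : ℝ) := by
      have h := key z hz
      have : (y - z) = -(z - y) := by abel
      rw [this, inner_neg_right]
      linarith
    have hips : (inner ℝ (t₀ • v₀) (y - z) : ℝ) = t₀ * inner ℝ v₀ (y - z) :=
      real_inner_smul_left _ _ _
    have hsq : t₀ ^ 2 ≤ ‖(y + t₀ • v₀) - z‖ ^ 2 := by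
      rw [hexp, hnsm, hips]
      nlinarith [sq_nonneg ‖y - z‖, mul_nonneg ht₀0 hip]
    rw [hdxy, dist_eq_norm]
    nlinarith [norm_nonneg ((y + t₀ • v₀) - z)]
  refine le_antisymm ?_ (Metric.infDist_le_dist_of_mem hyΩ)
  by_contra h
  push_neg at h
  obtain ⟨z, hz, hzlt⟩ := (Metric.infDist_lt_iff hΩne).1 h
  exact absurd (hle z hz) (not_le.2 hzlt)
end

section
/- Let $n \in \mathbb{N}$ and let $\lambda_1, \dots, \lambda_n$ be real numbers with $H = \sum_{i=1}^n \lambda_i$. If $\lambda_i (H - \lambda_i) > 0$ for every $i = 1, \dots, n$, then either $\lambda_i > 0$ for all $i$, or $\lambda_i < 0$ for all $i$. -/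
/-! `λᵢ (H - λᵢ) > 0` forces `λᵢ` and `H - λᵢ` to share a sign, which their sum `H` then
shares as well; so every `λᵢ` has the sign of `H`. -/

section

variable {R : Type*} [Ring R] [LinearOrder R] [IsStrictOrderedRing R] {a b : R}

theorem pos_and_pos_or_neg_and_neg_of_mul_sub_pos (h : 0 < a * (b - a)) :
    0 < a ∧ 0 < b ∨ a < 0 ∧ b < 0 := by
  rcases pos_and_pos_or_neg_and_neg_of_mul_pos h with ⟨ha, hba⟩ | ⟨ha, hba⟩
  · exact .inl ⟨ha, add_sub_cancel a b ▸ add_pos ha hba⟩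
  · exact .inr ⟨ha, add_sub_cancel a b ▸ add_neg ha hba⟩

end

theorem same_sign_of_ricci_positive_general (n : ℕ) (lam : Fin n → ℝ) (H : ℝ)
    (hpos : ∀ i, lam i * (H - lam i) > 0) :
    (∀ i, lam i > 0) ∨ (∀ i, lam i < 0) := by
  rcases lt_or_ge 0 H with hH | hH
  · refine .inl fun i => ?_
    rcases pos_and_pos_or_neg_and_neg_of_mul_sub_pos (hpos i) with ⟨hlam, -⟩ | ⟨-, hH'⟩
    · exact hlam
    · exact absurd hH' hH.not_gt
  · refine .inr fun i => ?_
    rcases pos_and_pos_or_neg_and_neg_of_mul_sub_pos (hpos i) with ⟨-, hH'⟩ | ⟨hlam, -⟩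
    · exact absurd hH' hH.not_gt
    · exact hlam

/-- The algebraic core of Lemma 4.1: if real numbers `λ₁, …, λₙ` with sum `H` satisfy
`λᵢ (H - λᵢ) > 0` for every `i`, then either all `λᵢ` are positive or all are
negative. -/
theorem same_sign_of_ricci_positive (n : ℕ) (lam : Fin n → ℝ) (H : ℝ)
    (hH : H = ∑ i, lam i) (hpos : ∀ i, lam i * (H - lam i) > 0) :
    (∀ i, lam i > 0) ∨ (∀ i, lam i < 0) :=
  same_sign_of_ricci_positive_general n lam H hpos
end

section
/- Let $c > 0$ and let $f, h : [0, c] \to \mathbb{R}$ with $f$ twice continuously differentiable, satisfying $f''(t) + f(t) = h(t)$, $h(t) \le 0$, and $f'(t) \le 0$ for all $t \in [0, c]$, together with $f(c) = 0$. Then for every $t \in [0, c]$ one has $f(t)^2 + f'(t)^2 \le f'(c)^2$, i.e. $f(t)^2 + f'(t)^2 - f'(c)^2 \le 0$. -/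
open Set

/-- Inequality (2.6) of the paper: if `f'' + f = h ≤ 0`, `f' ≤ 0` on `[0, c]` and
`f(c) = 0`, then `f(t)² + f'(t)² ≤ f'(c)²` on `[0, c]`. -/
theorem energy_le_of_ode (c : ℝ) (hc : 0 < c) (f f' f'' h : ℝ → ℝ)
    (hderiv : ∀ t ∈ Icc 0 c, HasDerivWithinAt f (f' t) (Icc 0 c) t)
    (hderiv' : ∀ t ∈ Icc 0 c, HasDerivWithinAt f' (f'' t) (Icc 0 c) t)
    (hcont : ContinuousOn f'' (Icc 0 c))
    (hode : ∀ t ∈ Icc 0 c, f'' t + f t = h t)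
    (hh : ∀ t ∈ Icc 0 c, h t ≤ 0)
    (hf' : ∀ t ∈ Icc 0 c, f' t ≤ 0)
    (hfc : f c = 0) :
    ∀ t ∈ Icc 0 c, f t ^ 2 + f' t ^ 2 ≤ f' c ^ 2 := by
  intro t ht
  set E : ℝ → ℝ := fun s => f s ^ 2 + f' s ^ 2 with hE
  have hEderiv : ∀ x ∈ Icc 0 c,
      HasDerivWithinAt E (2 * f' x * h x) (Icc 0 c) x := by
    intro x hx
    have h1 := ((hderiv x hx).pow 2).add ((hderiv' x hx).pow 2)
    refine h1.congr_deriv ?_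
    rw [← hode x hx]
    push_cast
    ring
  have hmono : MonotoneOn E (Icc 0 c) := by
    apply monotoneOn_of_hasDerivWithinAt_nonneg (convex_Icc 0 c)
      (fun x hx => ((hEderiv x hx).continuousWithinAt))
      (f' := fun x => 2 * f' x * h x)
      (fun x hx => (hEderiv x (interior_subset hx)).mono interior_subset)
    intro x hx
    have hx' : x ∈ Icc 0 c := interior_subset hx
    have := hf' x hx'
    have := hh x hx'
    nlinarith
  have := hmono ht (right_mem_Icc.mpr hc.le) ht.2
  simpa [hE, hfc] using this
end

section
/- For every real number $k \ge 1$, $\frac{-1 + \sqrt{1 + 2\sin(\frac{1}{k})\,(\sin(\frac{1}{k}) + 3k^3)}}{\sin(\frac{1}{k}) + 3k^3} \cdot k^2 \ \ge\ \frac{1}{4}$. -/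
open Real

/-- The explicit inequality from Step (2) of the proof of Lemma 2.3:
for `k ≥ 1`, the positive root of the quadratic is at least `1/(4k²)`. -/
theorem root_lower_bound (k : ℝ) (hk : 1 ≤ k) :
    (-1 + Real.sqrt (1 + 2 * Real.sin (1 / k) * (Real.sin (1 / k) + 3 * k ^ 3))) /
        (Real.sin (1 / k) + 3 * k ^ 3) * k ^ 2 ≥ 1 / 4 := by
  have hk0 : (0:ℝ) < k := lt_of_lt_of_le one_pos hk
  set x : ℝ := 1 / k with hx
  have hx0 : 0 < x := by positivity
  have hx1 : x ≤ 1 := by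
    rw [hx, div_le_one hk0]; exact hk
  have hkx : k * x = 1 := by rw [hx]; field_simp
  set s : ℝ := Real.sin x with hs
  have hs_lb : 3 / 4 * x < s := by
    rw [hs]
    have h := Real.sin_gt_sub_cube hx0
    have hx3 : x ^ 3 ≤ x := by nlinarith [pow_le_one₀ hx0.le hx1 (n := 2), hx0]
    linarith
  have hs_ub : s ≤ 1 := Real.sin_le_one x
  have hs0 : 0 < s := lt_trans (by positivity) hs_lb
  set A : ℝ := s + 3 * k ^ 3 with hA
  have hA0 : 0 < A := by positivity
  have hk3 : k ^ 3 * x ^ 4 = x := by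
    rw [hx]; field_simp
  have h2s : x ^ 2 / 2 + A * x ^ 4 / 16 ≤ 2 * s := by
    rw [hA]
    nlinarith [hs_lb, hx0, hx1, hs_ub, hs0, hk3, pow_le_one₀ hx0.le hx1 (n := 2),
      pow_le_one₀ hx0.le hx1 (n := 4), pow_pos hx0 4]
  have hkey : (1 + A / (4 * k ^ 2)) ^ 2 ≤ 1 + 2 * s * A := by
    have e : (1 + A / (4 * k ^ 2)) ^ 2 = 1 + A * (x ^ 2 / 2 + A * x ^ 4 / 16) := by
      rw [hx]; field_simp; ring
    rw [e]
    nlinarith [mul_le_mul_of_nonneg_left h2s hA0.le]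
  have hsqrt : 1 + A / (4 * k ^ 2) ≤
      Real.sqrt (1 + 2 * s * A) := by
    have := Real.sqrt_le_sqrt hkey
    rwa [Real.sqrt_sq (by positivity)] at this
  have hfin : A / (4 * k ^ 2) ≤ -1 + Real.sqrt (1 + 2 * s * A) := by linarith
  have h1 : A / (4 * k ^ 2) / A * k ^ 2 = 1 / 4 := by
    field_simp
  calc (1:ℝ)/4 = A / (4 * k ^ 2) / A * k ^ 2 := h1.symm
    _ ≤ (-1 + Real.sqrt (1 + 2 * s * A)) / A * k ^ 2 := by
        gcongr
end

section
/- Let $k \ge 1$ be a real number, let $a \in \mathbb{R}$, and let $f$ be twice differentiable on $[a, a + \frac{1}{4k^2}]$ with $f(a) = \sin(\frac{1}{k})$, $f'(a) \ge -1$, and $f''(t) \ge -\big(\sin(\frac{1}{k}) + 3k^3\big)$ for all $t \in [a, a + \frac{1}{4k^2}]$. Then $f(t) > 0$ for every $t \in [a, a + \frac{1}{4k^2})$. -/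
open Set Real

set_option maxHeartbeats 1000000

/-- Quantitative positivity from Step (2) of the proof of Lemma 2.3: if
`f(a) = sin(1/k)`, `f'(a) ≥ -1`, and `f'' ≥ -(sin(1/k) + 3k³)` on
`[a, a + 1/(4k²)]`, then `f > 0` on `[a, a + 1/(4k²))`. -/
theorem positivity_of_taylor_bound (k : ℝ) (hk : 1 ≤ k) (a : ℝ) (f f' f'' : ℝ → ℝ)
    (hderiv : ∀ t ∈ Icc a (a + 1 / (4 * k ^ 2)),
      HasDerivWithinAt f (f' t) (Icc a (a + 1 / (4 * k ^ 2))) t)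
    (hderiv' : ∀ t ∈ Icc a (a + 1 / (4 * k ^ 2)),
      HasDerivWithinAt f' (f'' t) (Icc a (a + 1 / (4 * k ^ 2))) t)
    (hfa : f a = Real.sin (1 / k))
    (hf'a : f' a ≥ -1)
    (hf'' : ∀ t ∈ Icc a (a + 1 / (4 * k ^ 2)),
      f'' t ≥ -(Real.sin (1 / k) + 3 * k ^ 3)) :
    ∀ t ∈ Ico a (a + 1 / (4 * k ^ 2)), f t > 0 := by
  have hk0 : (0:ℝ) < k := lt_of_lt_of_le one_pos hk
  have hδ : (0:ℝ) < 1 / (4 * k ^ 2) := by positivity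
  obtain ⟨b, hbdef⟩ : ∃ b, b = a + 1 / (4 * k ^ 2) := ⟨_, rfl⟩
  rw [← hbdef] at hderiv hderiv' hf'' ⊢
  have hab : a < b := by rw [hbdef]; linarith
  obtain ⟨M, hMdef⟩ : ∃ M, M = Real.sin (1/k) + 3 * k ^ 3 := ⟨_, rfl⟩
  rw [show Real.sin (1/k) + 3 * k ^ 3 = M from hMdef.symm] at hf''
  have hsin1 : Real.sin (1/k) ≤ 1 := Real.sin_le_one _
  have hsinm1 : -1 ≤ Real.sin (1/k) := Real.neg_one_le_sin _
  have hk3 : (1:ℝ) ≤ k ^ 3 := by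
    nlinarith [mul_nonneg (sub_nonneg.2 hk) (show (0:ℝ) ≤ k^2 + k + 1 by positivity)]
  have hM : 0 < M := by rw [hMdef]; linarith
  -- generic monotonicity helper
  have key : ∀ (g g' : ℝ → ℝ), (∀ s ∈ Icc a b, HasDerivWithinAt g (g' s) (Icc a b) s) →
      (∀ s ∈ Icc a b, 0 ≤ g' s) → MonotoneOn g (Icc a b) := by
    intro g g' hg hg'
    have hd : ∀ s ∈ interior (Icc a b), HasDerivAt g (g' s) s := by
      intro s hs
      rw [interior_Icc] at hs
      exact (hg s (Ioo_subset_Icc_self hs)).hasDerivAt (Icc_mem_nhds hs.1 hs.2)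
    refine monotoneOn_of_deriv_nonneg (convex_Icc a b)
      (fun s hs => (hg s hs).continuousWithinAt)
      (fun s hs => (hd s hs).differentiableAt.differentiableWithinAt) ?_
    intro s hs
    rw [(hd s hs).deriv]
    rw [interior_Icc] at hs
    exact hg' s (Ioo_subset_Icc_self hs)
  -- ψ = f' + 1 + M (t - a) is monotone, hence nonneg on Icc
  have hψd : ∀ s ∈ Icc a b, HasDerivWithinAt (fun t => f' t + 1 + M * (t - a))
      (f'' s + M) (Icc a b) s := by
    intro s hs
    have h2 : HasDerivWithinAt (fun t => M * (t - a)) M (Icc a b) s := by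
      simpa using ((hasDerivWithinAt_id s (Icc a b)).sub_const a).const_mul M
    exact ((hderiv' s hs).add_const 1).add h2
  have hψmono : MonotoneOn (fun t => f' t + 1 + M * (t - a)) (Icc a b) :=
    key _ _ hψd (fun s hs => by have := hf'' s hs; linarith)
  have hψnn : ∀ s ∈ Icc a b, 0 ≤ f' s + 1 + M * (s - a) := by
    intro s hs
    have h := hψmono (left_mem_Icc.2 hab.le) hs hs.1
    simp only [sub_self, mul_zero, add_zero] at h
    linarith
  -- φ = f + (t-a) + M/2 (t-a)² is monotone
  have hφd : ∀ s ∈ Icc a b, HasDerivWithinAt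
      (fun t => f t + (t - a) + M / 2 * (t - a) ^ 2)
      (f' s + 1 + M * (s - a)) (Icc a b) s := by
    intro s hs
    have h1 : HasDerivWithinAt (fun t => (t : ℝ) - a) 1 (Icc a b) s :=
      (hasDerivWithinAt_id s (Icc a b)).sub_const a
    have h2 : HasDerivWithinAt (fun t => M / 2 * (t - a) ^ 2) (M * (s - a)) (Icc a b) s := by
      have := (h1.pow 2).const_mul (M / 2)
      exact this.congr_deriv (by rw [show (2:ℕ)-1 = 1 from rfl]; push_cast; ring)
    exact ((hderiv s hs).add h1).add h2
  have hφmono : MonotoneOn (fun t => f t + (t - a) + M / 2 * (t - a) ^ 2) (Icc a b) :=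
    key _ _ hφd hψnn
  -- conclude
  intro t ht
  have htIcc : t ∈ Icc a b := ⟨ht.1, ht.2.le⟩
  have hφ := hφmono (left_mem_Icc.2 hab.le) htIcc ht.1
  simp only [sub_self, mul_zero, add_zero, ne_eq, OfNat.ofNat_ne_zero,
    not_false_eq_true, zero_pow] at hφ
  rw [hfa] at hφ
  obtain ⟨s, hsdef⟩ : ∃ s, s = t - a := ⟨_, rfl⟩
  rw [show t - a = s from hsdef.symm] at hφ
  have hs0 : 0 ≤ s := by rw [hsdef]; linarith [ht.1]
  have hs1 : s < 1 / (4 * k ^ 2) := by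
    have h := ht.2; rw [hbdef] at h; rw [hsdef]; linarith
  have hs1' : 4 * k ^ 2 * s < 1 := by
    rw [lt_div_iff₀ (by positivity)] at hs1; linarith
  have hsin3 : 3 / (4 * k) < Real.sin (1/k) := by
    have h1 : (0:ℝ) < 1 / k := by positivity
    have h2 : 1 / k ≤ 1 := by rw [div_le_one hk0]; exact hk
    have h3 := Real.sin_gt_sub_cube h1
    have h4 : (1/k)^3 ≤ 1/k := by
      have := pow_le_pow_of_le_one h1.le h2 (by norm_num : 1 ≤ 3)
      simpa using this
    calc 3 / (4 * k) = 1/k - (1/k)/4 := by field_simp; ring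
    _ ≤ 1/k - (1/k)^3/4 := by linarith
    _ < Real.sin (1/k) := by nlinarith [h3, pow_pos h1 3]
  have h5 : 4 * k ^ 2 * s ^ 2 ≤ s := by
    nlinarith [mul_nonneg (show (0:ℝ) ≤ 1 - 4 * k ^ 2 * s by linarith) hs0]
  have hks : k * s ≤ 1 / (4 * k) := by
    rw [le_div_iff₀ (by positivity : (0:ℝ) < 4 * k)]; nlinarith
  have hM4 : M ≤ 4 * k ^ 3 := by rw [hMdef]; linarith
  have h6 : M / 2 * s ^ 2 ≤ 2 * k ^ 3 * s ^ 2 := by nlinarith [sq_nonneg s]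
  have h7 : 2 * k ^ 3 * s ^ 2 ≤ k / 2 * s := by
    nlinarith [mul_le_mul_of_nonneg_left h5 (show (0:ℝ) ≤ k / 2 by positivity)]
  have heq : (1:ℝ) / (8 * k) = (1 / (4 * k)) / 2 := by
    field_simp; ring
  have h8 : k / 2 * s ≤ 1 / (8 * k) := by rw [heq]; linarith
  have h9 : s ≤ 1 / (4 * k) := by
    have hle : 1 / (4 * k ^ 2) ≤ 1 / (4 * k) :=
      one_div_le_one_div_of_le (by positivity) (by nlinarith)
    linarith
  have hx : (0:ℝ) < 1 / (4 * k) := by positivity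
  have h10 : 3 / (4 * k) = 3 * (1 / (4 * k)) := by ring
  have hquad : 0 < Real.sin (1/k) - s - M / 2 * s ^ 2 := by
    rw [h10] at hsin3
    linarith
  linarith
end
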